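/- arXiv:1909.06707 — 3 statements merged into one kernel-verified Lean document; each statement's English description precedes it below -/
import Mathlib

section
/- Let p = ∑_{i=1}^k f_i where each f_i is a proper nondegenerate nonnegative circuit polynomial in n variables with inner exponent β^{(i)}, and suppose the f_i have at least one common zero in (ℝ∖{0})^n (so that p lies on the boundary of both C_{n,2d} and P_{n,2d}). Let V*(p) denote the set of zeros of p in (ℝ∖{0})^n. Then: (a) if β^{(i)} ∈ (2ℕ)^n for all i = 1,…,k, then |V*(p)| = 2^n; (b) otherwise 1 ≤ |V*(p)| ≤ 2^{n−1} and |V*(p)| divides 2^{n−1}; (c) in particular, if for every coordinate j ∈ {1,…,n} the entries β_j^{(1)}, …, β_j^{(k)} all have the same parity, then |V*(p)| = 2^{n−1} whenever some β^{(i)} ∉ (2ℕ)^n. -/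
open MvPolynomial Finset

noncomputable section

/-- The exponent vector of a monomial, viewed as a point of `ℝ^n`. -/
def expVec (n : ℕ) (e : Fin n →₀ ℕ) : Fin n → ℝ := fun i => (e i : ℝ)

/-- `IsCircuitWith n f r α β lam` says that `f` is a circuit polynomial in `n` variables with
outer exponents `α 0, …, α r` (the vertices of a simplex, all even), inner exponent `β`, and
barycentric coordinates `lam` (all positive, summing to `1`, with `β = ∑ lam j • α j`);
the coefficients at the outer exponents are positive and the support of `f` is contained in
the circuit. -/
def IsCircuitWith (n : ℕ) (f : MvPolynomial (Fin n) ℝ) (r : ℕ)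
    (α : Fin (r + 1) → (Fin n →₀ ℕ)) (β : Fin n →₀ ℕ) (lam : Fin (r + 1) → ℝ) : Prop :=
  r ≤ n ∧
  (∀ j i, Even (α j i)) ∧
  AffineIndependent ℝ (fun j => expVec n (α j)) ∧
  (∀ j, 0 < lam j) ∧
  (∑ j, lam j) = 1 ∧
  (∀ i, (β i : ℝ) = ∑ j, lam j * ((α j) i : ℝ)) ∧
  (∀ j, 0 < f.coeff (α j)) ∧
  (f.support : Set (Fin n →₀ ℕ)) ⊆ Set.range α ∪ {β}

/-- `f` is a circuit polynomial. -/
def IsCircuit (n : ℕ) (f : MvPolynomial (Fin n) ℝ) : Prop :=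
  ∃ r α β lam, IsCircuitWith n f r α β lam

/-- The circuit number `Θ_f = ∏ (f_{α(j)}/λ_j)^{λ_j}`. -/
def circuitNumber (n : ℕ) (f : MvPolynomial (Fin n) ℝ) (r : ℕ)
    (α : Fin (r + 1) → (Fin n →₀ ℕ)) (lam : Fin (r + 1) → ℝ) : ℝ :=
  ∏ j, Real.rpow (f.coeff (α j) / lam j) (lam j)

/-- `p` is a sum of nonnegative circuit polynomials (SONC). -/
def IsSONC (n : ℕ) (p : MvPolynomial (Fin n) ℝ) : Prop :=
  ∃ (k : ℕ) (μ : Fin k → ℝ) (g : Fin k → MvPolynomial (Fin n) ℝ),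
    (∀ i, 0 ≤ μ i) ∧ (∀ i, IsCircuit n (g i)) ∧
    (∀ i, ∀ x : Fin n → ℝ, 0 ≤ eval x (g i)) ∧ p = ∑ i, μ i • g i

/-- The SONC cone `C_{n,D}`. -/
def soncCone (n D : ℕ) : Set (MvPolynomial (Fin n) ℝ) :=
  {p | IsSONC n p ∧ p.totalDegree ≤ D}

/-- The nonnegativity cone `P_{n,D}`. -/
def posCone (n D : ℕ) : Set (MvPolynomial (Fin n) ℝ) :=
  {p | (∀ x : Fin n → ℝ, 0 ≤ eval x p) ∧ p.totalDegree ≤ D}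

/-- The SOS cone `Σ_{n,D}`. -/
def sosCone (n D : ℕ) : Set (MvPolynomial (Fin n) ℝ) :=
  {p | (∃ (k : ℕ) (g : Fin k → MvPolynomial (Fin n) ℝ), p = ∑ i, (g i) ^ 2) ∧
    p.totalDegree ≤ D}

/-- A sum of monomial squares: every term `c·x^α` has `c > 0` and `α` even. -/
def IsSumMonomialSquares (n : ℕ) (f : MvPolynomial (Fin n) ℝ) : Prop :=
  ∀ m ∈ f.support, 0 < f.coeff m ∧ ∀ i, Even (m i)

/-- A polynomial is nondegenerate if its Newton polytope is full-dimensional. -/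
def Nondegenerate (n : ℕ) (f : MvPolynomial (Fin n) ℝ) : Prop :=
  affineSpan ℝ (expVec n '' (f.support : Set (Fin n →₀ ℕ))) = ⊤

/-- Homogenization of `p` to degree `D`, with the new variable at index `0`. -/
def homogenize (n D : ℕ) (p : MvPolynomial (Fin n) ℝ) : MvPolynomial (Fin (n + 1)) ℝ :=
  ∑ m ∈ p.support, monomial (Finsupp.cons (D - m.sum fun _ e => e) m) (p.coeff m)

/-- The projective zero set of a form in `n` variables. -/
def projZeros (n : ℕ) (p : MvPolynomial (Fin n) ℝ) :
    Set (Projectivization ℝ (Fin n → ℝ)) :=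
  {x | eval x.rep p = 0}

/-- The affine zeros of `f` with all coordinates nonzero. -/
def affZerosStar (n : ℕ) (f : MvPolynomial (Fin n) ℝ) : Set (Fin n → ℝ) :=
  {x | (∀ i, x i ≠ 0) ∧ eval x f = 0}

end

noncomputable section AuxStmt12

open Real

namespace Stmt12Aux

variable {n : ℕ}

/-- The sign (±1) of a coordinate. -/
def sg (x : Fin n → ℝ) (j : Fin n) : ℝ := if 0 < x j then 1 else -1

lemma sg_one_or (x : Fin n → ℝ) (j : Fin n) : sg x j = 1 ∨ sg x j = -1 := by
  unfold sg; split <;> simp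

lemma abs_sg (x : Fin n → ℝ) (j : Fin n) : |sg x j| = 1 := by
  rcases sg_one_or x j with h | h <;> rw [h] <;> norm_num

lemma sg_ne_zero (x : Fin n → ℝ) (j : Fin n) : sg x j ≠ 0 := by
  rcases sg_one_or x j with h | h <;> rw [h] <;> norm_num

lemma sg_mul_abs {x : Fin n → ℝ} {j : Fin n} (h : x j ≠ 0) : sg x j * |x j| = x j := by
  rcases lt_trichotomy (x j) 0 with hx | hx | hx
  · rw [sg, if_neg (by linarith), abs_of_neg hx]; ring
  · exact absurd hx h
  · rw [sg, if_pos hx, abs_of_pos hx, one_mul]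

/-- The sign of the monomial `x^m`. -/
def sp (x : Fin n → ℝ) (m : Fin n →₀ ℕ) : ℝ := ∏ j, sg x j ^ (m j)

lemma sp_one_or (x : Fin n → ℝ) (m : Fin n →₀ ℕ) : sp x m = 1 ∨ sp x m = -1 := by
  have : |sp x m| = 1 := by
    rw [sp, Finset.abs_prod]
    rw [Finset.prod_congr rfl fun j _ => by rw [abs_pow, abs_sg, one_pow]]
    simp
  rcases abs_eq (by norm_num : (0:ℝ) ≤ 1) |>.1 this with h | h
  · exact Or.inl h
  · exact Or.inr h

lemma prod_pow_eq {x : Fin n → ℝ} (hx : ∀ j, x j ≠ 0) (m : Fin n →₀ ℕ) :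
    (∏ j, x j ^ m j) = sp x m * ∏ j, |x j| ^ (m j) := by
  rw [sp, ← Finset.prod_mul_distrib]
  exact Finset.prod_congr rfl fun j _ => by rw [← mul_pow, sg_mul_abs (hx j)]

lemma prod_pow_even {x : Fin n → ℝ} (m : Fin n →₀ ℕ) (hm : ∀ i, Even (m i)) :
    (∏ j, x j ^ m j) = ∏ j, |x j| ^ (m j) :=
  Finset.prod_congr rfl fun j _ => ((hm j).pow_abs (x j)).symm

section Circuit

variable {f : MvPolynomial (Fin n) ℝ} {r : ℕ} {α : Fin (r + 1) → (Fin n →₀ ℕ)}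
  {β : Fin n →₀ ℕ} {lam : Fin (r + 1) → ℝ}

lemma support_sub (hc : IsCircuitWith n f r α β lam) :
    f.support ⊆ insert β (Finset.image α Finset.univ) := by
  intro m hm
  rcases hc.2.2.2.2.2.2.2 hm with ⟨j, rfl⟩ | hm
  · exact Finset.mem_insert_of_mem (Finset.mem_image.2 ⟨j, Finset.mem_univ j, rfl⟩)
  · simp only [Set.mem_singleton_iff] at hm
    exact hm ▸ Finset.mem_insert_self _ _

lemma beta_basics (hc : IsCircuitWith n f r α β lam) (hp : ¬ IsSumMonomialSquares n f) :
    (∀ j, β ≠ α j) ∧ f.coeff β ≠ 0 := by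
  have key : ¬ ((f.support : Set (Fin n →₀ ℕ)) ⊆ Set.range α) := by
    intro hsub
    apply hp
    intro m hm
    rcases hsub hm with ⟨j, rfl⟩
    exact ⟨hc.2.2.2.2.2.2.1 j, hc.2.1 j⟩
  constructor
  · rintro j rfl
    apply key
    intro m hm
    rcases hc.2.2.2.2.2.2.2 hm with h | h
    · exact h
    · simp only [Set.mem_singleton_iff] at h; exact h ▸ ⟨j, rfl⟩
  · intro hcβ
    apply key
    intro m hm
    rcases hc.2.2.2.2.2.2.2 hm with h | h
    · exact h
    · exfalso
      simp only [Set.mem_singleton_iff] at h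
      subst h
      exact (MvPolynomial.mem_support_iff.1 hm) hcβ

lemma alpha_inj (hc : IsCircuitWith n f r α β lam) : Function.Injective α := by
  intro a b hab
  exact hc.2.2.1.injective (show expVec n (α a) = expVec n (α b) by rw [hab])

lemma evalD (hc : IsCircuitWith n f r α β lam) (hp : ¬ IsSumMonomialSquares n f)
    (x : Fin n → ℝ) :
    eval x f = (∑ j, f.coeff (α j) * ∏ t, x t ^ (α j t)) + f.coeff β * ∏ t, x t ^ (β t) := by
  obtain ⟨hne, -⟩ := beta_basics hc hp
  have hβim : β ∉ Finset.image α Finset.univ := by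
    simp only [Finset.mem_image, not_exists]
    rintro j ⟨-, h⟩
    exact hne j h.symm
  rw [eval_eq']
  rw [Finset.sum_subset (support_sub hc)
    (fun m _ hm => by rw [MvPolynomial.notMem_support_iff.1 hm, zero_mul])]
  rw [Finset.sum_insert hβim, Finset.sum_image (fun a _ b _ h => alpha_inj hc h)]
  ring

lemma evalD' (hc : IsCircuitWith n f r α β lam) (hp : ¬ IsSumMonomialSquares n f)
    {x : Fin n → ℝ} (hx : ∀ j, x j ≠ 0) :
    eval x f = (∑ j, f.coeff (α j) * ∏ t, |x t| ^ (α j t))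
      + f.coeff β * sp x β * ∏ t, |x t| ^ (β t) := by
  rw [evalD hc hp x, prod_pow_eq hx β]
  rw [Finset.sum_congr rfl fun j _ => by rw [prod_pow_even (α j) (hc.2.1 j)]]
  ring

lemma sum_pos_part {x : Fin n → ℝ} (hx : ∀ j, x j ≠ 0)
    (hc : IsCircuitWith n f r α β lam) :
    0 < ∑ j, f.coeff (α j) * ∏ t, |x t| ^ (α j t) := by
  apply Finset.sum_pos
  · intro j _
    exact mul_pos (hc.2.2.2.2.2.2.1 j)
      (Finset.prod_pos fun t _ => pow_pos (abs_pos.2 (hx t)) _)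
  · exact Finset.univ_nonempty

lemma coeff_sp_neg (hc : IsCircuitWith n f r α β lam) (hp : ¬ IsSumMonomialSquares n f)
    {x : Fin n → ℝ} (hx : ∀ j, x j ≠ 0) (h0 : eval x f = 0) :
    f.coeff β * sp x β < 0 := by
  have hD := evalD' hc hp hx
  rw [h0] at hD
  have hS := sum_pos_part hx hc
  have hP : 0 < ∏ t, |x t| ^ (β t) :=
    Finset.prod_pos fun t _ => pow_pos (abs_pos.2 (hx t)) _
  nlinarith

lemma sp_eq_sp (hc : IsCircuitWith n f r α β lam) (hp : ¬ IsSumMonomialSquares n f)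
    {x x' : Fin n → ℝ} (hx : ∀ j, x j ≠ 0) (hx' : ∀ j, x' j ≠ 0)
    (h0 : eval x f = 0) (h0' : eval x' f = 0) : sp x β = sp x' β := by
  have h1 := coeff_sp_neg hc hp hx h0
  have h2 := coeff_sp_neg hc hp hx' h0'
  rcases sp_one_or x β with ha | ha <;> rcases sp_one_or x' β with hb | hb <;>
    rw [ha] at h1 ⊢ <;> rw [hb] at h2 ⊢ <;> first | rfl | nlinarith

lemma eval_congr_aux (hc : IsCircuitWith n f r α β lam)
    {x x' : Fin n → ℝ} (hx : ∀ j, x j ≠ 0) (hx' : ∀ j, x' j ≠ 0)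
    (habs : ∀ j, |x j| = |x' j|) (hsp : sp x β = sp x' β) :
    eval x f = eval x' f := by
  have habs' : (fun j => |x j|) = fun j => |x' j| := funext habs
  rw [eval_eq', eval_eq']
  apply Finset.sum_congr rfl
  intro m hm
  congr 1
  rcases hc.2.2.2.2.2.2.2 hm with ⟨j, rfl⟩ | h
  · rw [prod_pow_even (x := x) (α j) (hc.2.1 j), prod_pow_even (x := x') (α j) (hc.2.1 j)]
    exact Finset.prod_congr rfl fun t _ => by rw [habs t]
  · simp only [Set.mem_singleton_iff] at h
    subst h
    rw [prod_pow_eq hx, prod_pow_eq hx', hsp]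
    congr 1
    exact Finset.prod_congr rfl fun t _ => by rw [habs t]

lemma prod_abs_exp (m : Fin n →₀ ℕ) (w : Fin n → ℝ) :
    (∏ t, Real.exp (w t) ^ (m t)) = Real.exp (∑ t, (m t : ℝ) * w t) := by
  rw [Real.exp_sum]
  exact Finset.prod_congr rfl fun t _ => (Real.exp_nat_mul (w t) (m t)).symm

/-- Pure-real strict-convexity/AM-GM argument: if the exponential form
`w ↦ ∑ aⱼ exp(⟨Aⱼ,w⟩) - b·exp(⟨B,w⟩)` is nonnegative and vanishes at `w` and `w'`,
then all the linear forms `⟨Aⱼ - B, ·⟩` agree on `w` and `w'`. -/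
lemma analytic_key {N R : ℕ} (A : Fin (R + 1) → Fin N → ℝ) (B : Fin N → ℝ)
    (a : Fin (R + 1) → ℝ) (ha : ∀ j, 0 < a j) (b : ℝ)
    (hF : ∀ w : Fin N → ℝ,
      b * Real.exp (∑ t, B t * w t) ≤ ∑ j, a j * Real.exp (∑ t, A j t * w t))
    {w w' : Fin N → ℝ}
    (hw : (∑ j, a j * Real.exp (∑ t, A j t * w t)) = b * Real.exp (∑ t, B t * w t))
    (hw' : (∑ j, a j * Real.exp (∑ t, A j t * w' t)) = b * Real.exp (∑ t, B t * w' t))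
    (j : Fin (R + 1)) :
    (∑ t, A j t * w t) - (∑ t, B t * w t) = (∑ t, A j t * w' t) - (∑ t, B t * w' t) := by
  have hb : 0 < b := by
    have hpos : 0 < ∑ j, a j * Real.exp (∑ t, A j t * w t) :=
      Finset.sum_pos (fun i _ => mul_pos (ha i) (Real.exp_pos _)) Finset.univ_nonempty
    rw [hw] at hpos
    by_contra h
    push_neg at h
    nlinarith [Real.exp_pos (∑ t, B t * w t)]
  set U : Fin (R + 1) → ℝ := fun i => (∑ t, A i t * w t) - (∑ t, B t * w t) with hU
  set V : Fin (R + 1) → ℝ := fun i => (∑ t, A i t * w' t) - (∑ t, B t * w' t) with hV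
  have he1 : (∑ i, a i * Real.exp (U i)) = b := by
    have h1 : (∑ i, a i * Real.exp (U i))
        = ∑ i, a i * Real.exp (∑ t, A i t * w t) / Real.exp (∑ t, B t * w t) := by
      refine Finset.sum_congr rfl fun i _ => ?_
      simp only [hU]
      rw [Real.exp_sub, mul_div_assoc]
    rw [h1, ← Finset.sum_div, hw, mul_div_assoc, div_self (Real.exp_ne_zero _), mul_one]
  have he2 : (∑ i, a i * Real.exp (V i)) = b := by
    have h1 : (∑ i, a i * Real.exp (V i))
        = ∑ i, a i * Real.exp (∑ t, A i t * w' t) / Real.exp (∑ t, B t * w' t) := by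
      refine Finset.sum_congr rfl fun i _ => ?_
      simp only [hV]
      rw [Real.exp_sub, mul_div_assoc]
    rw [h1, ← Finset.sum_div, hw', mul_div_assoc, div_self (Real.exp_ne_zero _), mul_one]
  have he3 : b ≤ ∑ i, a i * Real.exp ((U i + V i) / 2) := by
    have h1 := hF (fun t => (w t + w' t) / 2)
    have hA : ∀ i : Fin (R + 1), (∑ t, A i t * ((w t + w' t) / 2))
        = ((∑ t, A i t * w t) + ∑ t, A i t * w' t) / 2 := by
      intro i
      rw [← Finset.sum_add_distrib, Finset.sum_div]
      exact Finset.sum_congr rfl fun t _ => by ring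
    have hB : (∑ t, B t * ((w t + w' t) / 2))
        = ((∑ t, B t * w t) + ∑ t, B t * w' t) / 2 := by
      rw [← Finset.sum_add_distrib, Finset.sum_div]
      exact Finset.sum_congr rfl fun t _ => by ring
    have hAs : (∑ i, a i * Real.exp (∑ t, A i t * ((w t + w' t) / 2)))
        = ∑ i, a i * Real.exp (((∑ t, A i t * w t) + ∑ t, A i t * w' t) / 2) :=
      Finset.sum_congr rfl fun i _ => by rw [hA i]
    rw [hB, hAs] at h1
    have h2 : (∑ i, a i * Real.exp ((U i + V i) / 2))
        = (∑ i, a i * Real.exp (((∑ t, A i t * w t) + ∑ t, A i t * w' t) / 2))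
          / Real.exp (((∑ t, B t * w t) + ∑ t, B t * w' t) / 2) := by
      rw [Finset.sum_div]
      refine Finset.sum_congr rfl fun i _ => ?_
      have h3 : (U i + V i) / 2 = ((∑ t, A i t * w t) + ∑ t, A i t * w' t) / 2
          - ((∑ t, B t * w t) + ∑ t, B t * w' t) / 2 := by
        simp only [hU, hV]; ring
      rw [h3, Real.exp_sub, mul_div_assoc]
    rw [h2, le_div_iff₀ (Real.exp_pos _)]
    exact h1
  have hnonneg : ∀ i ∈ Finset.univ,
      (0:ℝ) ≤ a i * ((Real.exp (U i) + Real.exp (V i)) / 2 - Real.exp ((U i + V i) / 2)) := by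
    intro i _
    have hu2 : Real.exp (U i) = Real.exp (U i / 2) * Real.exp (U i / 2) := by
      rw [← Real.exp_add]; ring_nf
    have hv2 : Real.exp (V i) = Real.exp (V i / 2) * Real.exp (V i / 2) := by
      rw [← Real.exp_add]; ring_nf
    have huv2 : Real.exp ((U i + V i) / 2) = Real.exp (U i / 2) * Real.exp (V i / 2) := by
      rw [← Real.exp_add]; ring_nf
    have hai := ha i
    nlinarith [sq_nonneg (Real.exp (U i / 2) - Real.exp (V i / 2))]
  have hsum0 : (∑ i, a i * ((Real.exp (U i) + Real.exp (V i)) / 2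
      - Real.exp ((U i + V i) / 2))) = 0 := by
    have hexpand : (∑ i, a i * ((Real.exp (U i) + Real.exp (V i)) / 2
        - Real.exp ((U i + V i) / 2)))
        = ((∑ i, a i * Real.exp (U i)) + ∑ i, a i * Real.exp (V i)) / 2
          - ∑ i, a i * Real.exp ((U i + V i) / 2) := by
      rw [← Finset.sum_add_distrib, Finset.sum_div, ← Finset.sum_sub_distrib]
      exact Finset.sum_congr rfl fun i _ => by ring
    have hge := Finset.sum_nonneg hnonneg
    rw [hexpand, he1, he2] at hge ⊢
    linarith
  have hj0 := (Finset.sum_eq_zero_iff_of_nonneg hnonneg).1 hsum0 j (Finset.mem_univ j)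
  have hbrk : (Real.exp (U j) + Real.exp (V j)) / 2 - Real.exp ((U j + V j) / 2) = 0 := by
    rcases mul_eq_zero.1 hj0 with h | h
    · exact absurd h (ne_of_gt (ha j))
    · exact h
  have hu2 : Real.exp (U j) = Real.exp (U j / 2) * Real.exp (U j / 2) := by
    rw [← Real.exp_add]; ring_nf
  have hv2 : Real.exp (V j) = Real.exp (V j / 2) * Real.exp (V j / 2) := by
    rw [← Real.exp_add]; ring_nf
  have huv2 : Real.exp ((U j + V j) / 2) = Real.exp (U j / 2) * Real.exp (V j / 2) := by
    rw [← Real.exp_add]; ring_nf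
  have hsq : (Real.exp (U j / 2) - Real.exp (V j / 2)) ^ 2 = 0 := by nlinarith
  have hexp_eq : Real.exp (U j / 2) = Real.exp (V j / 2) := by
    have h := pow_eq_zero_iff (n := 2) (by norm_num) |>.1 hsq
    linarith [sub_eq_zero.1 h]
  have hUV := Real.exp_eq_exp.1 hexp_eq
  show U j = V j
  field_simp at hUV
  exact hUV

lemma eval_exp_form (hc : IsCircuitWith n f r α β lam) (hp : ¬ IsSumMonomialSquares n f)
    {x : Fin n → ℝ} (hx : ∀ j, x j ≠ 0) (w : Fin n → ℝ)
    {z : Fin n → ℝ} (hz : ∀ j, z j = sg x j * Real.exp (w j)) :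
    eval z f = (∑ j, f.coeff (α j) * Real.exp (∑ t, ((α j) t : ℝ) * w t))
      + (f.coeff β * sp x β) * Real.exp (∑ t, (β t : ℝ) * w t) := by
  have hzne : ∀ j, z j ≠ 0 := fun j => by
    rw [hz j]; exact mul_ne_zero (sg_ne_zero x j) (Real.exp_ne_zero _)
  have habs : ∀ t, |z t| = Real.exp (w t) := fun t => by
    rw [hz t, abs_mul, abs_sg, one_mul, abs_of_pos (Real.exp_pos _)]
  have hsgz : ∀ t, sg z t = sg x t := by
    intro t
    have hiff : 0 < z t ↔ 0 < x t := by
      rw [hz t, sg]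
      rcases lt_trichotomy (x t) 0 with hxt | hxt | hxt
      · rw [if_neg (by linarith)]
        constructor
        · intro h; nlinarith [Real.exp_pos (w t)]
        · intro h; linarith
      · exact absurd hxt (hx t)
      · rw [if_pos hxt]
        constructor
        · intro _; exact hxt
        · intro _; nlinarith [Real.exp_pos (w t)]
    rw [sg, sg, if_congr hiff rfl rfl]
  have hspz : sp z β = sp x β :=
    Finset.prod_congr rfl fun t _ => by rw [hsgz t]
  have hprod : ∀ m : Fin n →₀ ℕ,
      (∏ t, |z t| ^ (m t)) = Real.exp (∑ t, (m t : ℝ) * w t) := by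
    intro m
    have h1 : (∏ t, |z t| ^ (m t)) = ∏ t, Real.exp (w t) ^ (m t) :=
      Finset.prod_congr rfl fun t _ => by rw [habs t]
    rw [h1, prod_abs_exp]
  have h2 : (∑ j, f.coeff (α j) * ∏ t, |z t| ^ ((α j) t))
      = ∑ j, f.coeff (α j) * Real.exp (∑ t, ((α j) t : ℝ) * w t) :=
    Finset.sum_congr rfl fun i _ => by rw [hprod (α i)]
  rw [evalD' hc hp hzne, h2, hprod β, hspz]

/-- Key analytic lemma: any two zeros of a nonnegative nondegenerate proper circuit
polynomial in `(ℝ∖{0})^n` have the same coordinatewise absolute values. -/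
lemma abs_eq_abs_of_zeros (hc : IsCircuitWith n f r α β lam)
    (hp : ¬ IsSumMonomialSquares n f) (hnd : Nondegenerate n f)
    (hnnf : ∀ y : Fin n → ℝ, 0 ≤ eval y f)
    {x x' : Fin n → ℝ} (hx : ∀ j, x j ≠ 0) (hx' : ∀ j, x' j ≠ 0)
    (h0 : eval x f = 0) (h0' : eval x' f = 0) : ∀ j, |x j| = |x' j| := by
  classical
  have hσeq : sp x β = sp x' β := sp_eq_sp hc hp hx hx' h0 h0'
  have hF : ∀ w : Fin n → ℝ,
      (-(f.coeff β * sp x β)) * Real.exp (∑ t, (β t : ℝ) * w t)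
        ≤ ∑ j, f.coeff (α j) * Real.exp (∑ t, ((α j) t : ℝ) * w t) := by
    intro w
    have h := hnnf (fun j => sg x j * Real.exp (w j))
    rw [eval_exp_form hc hp hx w (fun j => rfl)] at h
    linarith
  have hw0 : (∑ j, f.coeff (α j) * Real.exp (∑ t, ((α j) t : ℝ) * Real.log |x t|))
      = (-(f.coeff β * sp x β)) * Real.exp (∑ t, (β t : ℝ) * Real.log |x t|) := by
    have h := eval_exp_form hc hp hx (fun t => Real.log |x t|) (z := x) (fun j => by
      rw [Real.exp_log (abs_pos.2 (hx j)), sg_mul_abs (hx j)])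
    rw [h0] at h
    linarith
  have hw0' : (∑ j, f.coeff (α j) * Real.exp (∑ t, ((α j) t : ℝ) * Real.log |x' t|))
      = (-(f.coeff β * sp x β)) * Real.exp (∑ t, (β t : ℝ) * Real.log |x' t|) := by
    have h := eval_exp_form hc hp hx' (fun t => Real.log |x' t|) (z := x') (fun j => by
      rw [Real.exp_log (abs_pos.2 (hx' j)), sg_mul_abs (hx' j)])
    rw [h0', ← hσeq] at h
    linarith
  have hkey := analytic_key (fun j t => ((α j) t : ℝ)) (fun t => (β t : ℝ))
      (fun j => f.coeff (α j)) (fun j => hc.2.2.2.2.2.2.1 j)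
      (-(f.coeff β * sp x β)) hF hw0 hw0'
  -- rearrange to a statement about δ = log|x| - log|x'|
  have hkey2 : ∀ j, (∑ t, ((α j) t : ℝ) * (Real.log |x t| - Real.log |x' t|))
      = ∑ t, (β t : ℝ) * (Real.log |x t| - Real.log |x' t|) := by
    intro j
    have h1 := hkey j
    have e1 : (∑ t, ((α j) t : ℝ) * (Real.log |x t| - Real.log |x' t|))
        = (∑ t, ((α j) t : ℝ) * Real.log |x t|) - ∑ t, ((α j) t : ℝ) * Real.log |x' t| := by
      rw [← Finset.sum_sub_distrib]
      exact Finset.sum_congr rfl fun t _ => by ring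
    have e2 : (∑ t, (β t : ℝ) * (Real.log |x t| - Real.log |x' t|))
        = (∑ t, (β t : ℝ) * Real.log |x t|) - ∑ t, (β t : ℝ) * Real.log |x' t| := by
      rw [← Finset.sum_sub_distrib]
      exact Finset.sum_congr rfl fun t _ => by ring
    rw [e1, e2]
    linarith
  set δ : Fin n → ℝ := fun t => Real.log |x t| - Real.log |x' t| with hδ
  set φ : (Fin n → ℝ) →ₗ[ℝ] ℝ :=
    { toFun := fun q => ∑ t, q t * δ t
      map_add' := fun p q => by
        simp only [Pi.add_apply, add_mul]
        rw [Finset.sum_add_distrib]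
      map_smul' := fun cc q => by
        simp only [Pi.smul_apply, smul_eq_mul, RingHom.id_apply]
        rw [Finset.mul_sum]
        exact Finset.sum_congr rfl fun t _ => by ring } with hφ
  have hφapp : ∀ q : Fin n → ℝ, φ q = ∑ t, q t * δ t := fun q => rfl
  have hkey3 : ∀ j, φ (expVec n (α j)) = φ (expVec n β) := by
    intro j
    rw [hφapp, hφapp]
    have e1 : (∑ t, expVec n (α j) t * δ t) = ∑ t, ((α j) t : ℝ) * δ t :=
      Finset.sum_congr rfl fun t _ => rfl
    have e2 : (∑ t, expVec n β t * δ t) = ∑ t, (β t : ℝ) * δ t :=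
      Finset.sum_congr rfl fun t _ => rfl
    rw [e1, e2]
    simpa only [hδ] using hkey2 j
  have hφval : ∀ p ∈ expVec n '' (f.support : Set (Fin n →₀ ℕ)),
      φ p = φ (expVec n β) := by
    rintro p ⟨m, hm, rfl⟩
    rcases hc.2.2.2.2.2.2.2 hm with ⟨j, rfl⟩ | h
    · exact hkey3 j
    · simp only [Set.mem_singleton_iff] at h
      rw [h]
  have hspan : vectorSpan ℝ (expVec n '' (f.support : Set (Fin n →₀ ℕ))) = ⊤ :=
    AffineSubspace.vectorSpan_eq_top_of_affineSpan_eq_top ℝ _ _ hnd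
  have hker : (⊤ : Submodule ℝ (Fin n → ℝ)) ≤ LinearMap.ker φ := by
    rw [← hspan, vectorSpan_def]
    apply Submodule.span_le.2
    rintro q ⟨p1, hp1, p2, hp2, rfl⟩
    simp only [SetLike.mem_coe, LinearMap.mem_ker, vsub_eq_sub, map_sub]
    rw [hφval p1 hp1, hφval p2 hp2, sub_self]
  have hφδ : φ δ = 0 := hker Submodule.mem_top
  have hδ0 : ∀ t, δ t = 0 := by
    have hφδ' : (∑ t, δ t * δ t) = 0 := hφδ
    intro t
    have h := (Finset.sum_eq_zero_iff_of_nonneg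
      (fun t _ => mul_self_nonneg (δ t))).1 hφδ' t (Finset.mem_univ t)
    exact mul_self_eq_zero.1 h
  intro j
  have hδj : Real.log |x j| - Real.log |x' j| = 0 := by
    have h := hδ0 j; simpa only [hδ] using h
  have hlog : Real.log |x j| = Real.log |x' j| := by linarith
  have h := congrArg Real.exp hlog
  rwa [Real.exp_log (abs_pos.2 (hx j)), Real.exp_log (abs_pos.2 (hx' j))] at h

end Circuit

/-- `ν : ZMod 2 → {±1} ⊆ ℝ`. -/
def nu (z : ZMod 2) : ℝ := if z = 0 then 1 else -1

lemma zmod_two_cases : ∀ z : ZMod 2, z = 0 ∨ z = 1 := by decide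

lemma nu_add (a b : ZMod 2) : nu (a + b) = nu a * nu b := by
  have h11 : (1 : ZMod 2) + 1 = 0 := by decide
  have h10 : (1 : ZMod 2) ≠ 0 := by decide
  rcases zmod_two_cases a with rfl | rfl <;> rcases zmod_two_cases b with rfl | rfl <;>
    simp [nu, h11, h10]

lemma nu_zero : nu 0 = 1 := by simp [nu]

lemma nu_inj : Function.Injective nu := by
  intro a b h
  have h10 : (1 : ZMod 2) ≠ 0 := by decide
  rcases zmod_two_cases a with rfl | rfl <;> rcases zmod_two_cases b with rfl | rfl <;>
    first
      | rfl
      | norm_num [nu, h10] at h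

lemma nu_pow (m : ℕ) (z : ZMod 2) : nu z ^ m = nu ((m : ZMod 2) * z) := by
  induction m with
  | zero => simp [nu_zero]
  | succ m ih =>
      rw [pow_succ, ih, Nat.cast_succ, add_mul, one_mul, nu_add]

lemma nu_sum {ι : Type*} (t : Finset ι) (g : ι → ZMod 2) :
    nu (∑ i ∈ t, g i) = ∏ i ∈ t, nu (g i) := by
  classical
  induction t using Finset.induction with
  | empty => simp [nu_zero]
  | insert _ _ hx ih =>
      rw [Finset.sum_insert hx, Finset.prod_insert hx, nu_add, ih]

/-- The `ZMod 2` sign vector of a point. -/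
def sv (x : Fin n → ℝ) : Fin n → ZMod 2 := fun j => if 0 < x j then 0 else 1

lemma nu_sv (x : Fin n → ℝ) (j : Fin n) : nu (sv x j) = sg x j := by
  rw [sv, sg]
  by_cases h : 0 < x j
  · rw [if_pos h, if_pos h, nu_zero]
  · rw [if_neg h, if_neg h, nu]
    rw [if_neg (by decide : (1 : ZMod 2) ≠ 0)]

lemma sp_eq_nu (x : Fin n → ℝ) (m : Fin n →₀ ℕ) :
    sp x m = nu (∑ j, (m j : ZMod 2) * sv x j) := by
  rw [sp, nu_sum]
  exact Finset.prod_congr rfl fun j _ => by rw [← nu_sv, nu_pow]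

lemma nu_ne_zero (z : ZMod 2) : nu z ≠ 0 := by
  rcases zmod_two_cases z with rfl | rfl <;> norm_num [nu, show (1 : ZMod 2) ≠ 0 by decide]

lemma abs_nu (z : ZMod 2) : |nu z| = 1 := by
  rcases zmod_two_cases z with rfl | rfl <;>
    norm_num [nu, show (1 : ZMod 2) ≠ 0 by decide]

lemma cast_eq_zero_of_even {m : ℕ} (h : Even m) : (m : ZMod 2) = 0 := by
  obtain ⟨c, rfl⟩ := h
  push_cast
  have : ∀ a : ZMod 2, a + a = 0 := by decide
  exact this _

lemma cast_eq_one_of_odd {m : ℕ} (h : ¬ Even m) : (m : ZMod 2) = 1 := by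
  obtain ⟨c, rfl⟩ := Nat.not_even_iff_odd.1 h
  push_cast
  have : ∀ a : ZMod 2, a + a = 0 := by decide
  rw [two_mul, this, zero_add]

/-- The linear functional `s ↦ ∑ⱼ cⱼ sⱼ` on `(ZMod 2)ⁿ`. -/
def lin {n : ℕ} (c : Fin n → ZMod 2) : (Fin n → ZMod 2) →+ ZMod 2 :=
  AddMonoidHom.mk' (fun s => ∑ j, c j * s j) (fun s s' => by
    rw [← Finset.sum_add_distrib]
    exact Finset.sum_congr rfl fun j _ => by
      show c j * (s j + s' j) = _
      rw [mul_add])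

lemma lin_apply {n : ℕ} (c : Fin n → ZMod 2) (s : Fin n → ZMod 2) :
    lin c s = ∑ j, c j * s j := rfl

lemma card_pi_zmod (n : ℕ) : Nat.card (Fin n → ZMod 2) = 2 ^ n := by
  rw [Nat.card_eq_fintype_card, Fintype.card_fun, ZMod.card, Fintype.card_fin]

lemma card_ker_lin {n : ℕ} (c : Fin n → ZMod 2) (j0 : Fin n) (hc : c j0 = 1) :
    Nat.card (AddMonoidHom.ker (lin c)) = 2 ^ (n - 1) := by
  have hsurj : Function.Surjective (lin c) := by
    intro z
    rcases zmod_two_cases z with rfl | rfl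
    · exact ⟨0, by simp⟩
    · refine ⟨Pi.single j0 1, ?_⟩
      rw [lin_apply, Finset.sum_eq_single j0]
      · rw [Pi.single_eq_same, hc, mul_one]
      · intro b _ hb
        rw [Pi.single_eq_of_ne hb, mul_zero]
      · intro hj
        exact absurd (Finset.mem_univ j0) hj
  have h1 := AddSubgroup.card_eq_card_quotient_mul_card_addSubgroup (AddMonoidHom.ker (lin c))
  have h2 : Nat.card ((Fin n → ZMod 2) ⧸ AddMonoidHom.ker (lin c)) = 2 := by
    rw [Nat.card_congr
      (QuotientAddGroup.quotientKerEquivOfSurjective (lin c) hsurj).toEquiv, Nat.card_zmod]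
  rw [card_pi_zmod, h2] at h1
  have hn : 0 < n := j0.pos
  have h3 : 2 ^ n = 2 * 2 ^ (n - 1) := by
    rw [← pow_succ']
    congr 1
    omega
  rw [h3] at h1
  exact (Nat.eq_of_mul_eq_mul_left (by norm_num) h1).symm

end Stmt12Aux

end AuxStmt12

/-- Let `p = ∑_{i=1}^k f_i` with each `f_i` a proper nondegenerate
nonnegative circuit polynomial with inner exponent `β⁽ⁱ⁾`, having a common zero in
`(ℝ∖{0})^n`. Let `V*(p)` be the set of zeros of `p` in `(ℝ∖{0})^n`. Then:
(a) if all `β⁽ⁱ⁾` are even, `|V*(p)| = 2^n`;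
(b) otherwise `1 ≤ |V*(p)| ≤ 2^{n−1}` and `|V*(p)|` divides `2^{n−1}`;
(c) if for every coordinate `j` the entries `β⁽¹⁾_j, …, β⁽ᵏ⁾_j` all have the same parity and
some `β⁽ⁱ⁾` is not even, then `|V*(p)| = 2^{n−1}`. -/
theorem stmt12 (n d k : ℕ) (hk : 0 < k)
    (f : Fin k → MvPolynomial (Fin n) ℝ) (r : Fin k → ℕ)
    (α : (i : Fin k) → Fin (r i + 1) → (Fin n →₀ ℕ))
    (β : Fin k → (Fin n →₀ ℕ))
    (lam : (i : Fin k) → Fin (r i + 1) → ℝ)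
    (hf : ∀ i, IsCircuitWith n (f i) (r i) (α i) (β i) (lam i))
    (hproper : ∀ i, ¬ IsSumMonomialSquares n (f i))
    (hnd : ∀ i, Nondegenerate n (f i))
    (hnn : ∀ i, ∀ x : Fin n → ℝ, 0 ≤ eval x (f i))
    (hdeg : ∀ i, (f i).totalDegree ≤ 2 * d)
    (hcz : ∃ x : Fin n → ℝ, (∀ j, x j ≠ 0) ∧ ∀ i, eval x (f i) = 0) :
    ((∀ i j, Even (β i j)) →
      (affZerosStar n (∑ i, f i)).Finite ∧ (affZerosStar n (∑ i, f i)).ncard = 2 ^ n) ∧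
    ((¬ ∀ i j, Even (β i j)) →
      (affZerosStar n (∑ i, f i)).Finite ∧
      1 ≤ (affZerosStar n (∑ i, f i)).ncard ∧
      (affZerosStar n (∑ i, f i)).ncard ≤ 2 ^ (n - 1) ∧
      (affZerosStar n (∑ i, f i)).ncard ∣ 2 ^ (n - 1)) ∧
    ((∀ j : Fin n, ∀ i₁ i₂ : Fin k, (Even (β i₁ j) ↔ Even (β i₂ j))) →
      (¬ ∀ i j, Even (β i j)) →
      (affZerosStar n (∑ i, f i)).ncard = 2 ^ (n - 1)) := by
  classical
  open Stmt12Aux in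
  obtain ⟨xs, hxs, hxz⟩ := hcz
  have hself : ∀ a : ZMod 2, a + a = 0 := by decide
  set p : MvPolynomial (Fin n) ℝ := ∑ i, f i with hpdef
  have hpz : ∀ x : Fin n → ℝ, eval x p = 0 ↔ ∀ i, eval x (f i) = 0 := by
    intro x
    rw [hpdef, map_sum]
    constructor
    · intro h i
      exact (Finset.sum_eq_zero_iff_of_nonneg (fun i _ => hnn i x)).1 h i (Finset.mem_univ i)
    · intro h
      exact Finset.sum_eq_zero fun i _ => h i
  set X : (Fin n → ZMod 2) → (Fin n → ℝ) := fun s j => nu (s j) * |xs j| with hX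
  set T : Set (Fin n → ZMod 2) :=
    {s | ∀ i, (∑ j, ((β i) j : ZMod 2) * s j) = ∑ j, ((β i) j : ZMod 2) * sv xs j} with hT
  have hXne : ∀ s j, X s j ≠ 0 := fun s j =>
    mul_ne_zero (nu_ne_zero _) (abs_ne_zero.2 (hxs j))
  have hXinj : Function.Injective X := by
    intro s s' h
    funext j
    have hj : nu (s j) * |xs j| = nu (s' j) * |xs j| := congrFun h j
    exact nu_inj (mul_right_cancel₀ (abs_ne_zero.2 (hxs j)) hj)
  have hsvX : ∀ s, sv (X s) = s := by
    intro s
    funext j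
    rcases zmod_two_cases (s j) with h | h
    · have hpos : 0 < X s j := by
        show 0 < nu (s j) * |xs j|
        rw [h, nu_zero, one_mul]
        exact abs_pos.2 (hxs j)
      rw [sv, if_pos hpos, h]
    · have hneg : ¬ 0 < X s j := by
        show ¬ 0 < nu (s j) * |xs j|
        rw [h, nu, if_neg (by decide : (1 : ZMod 2) ≠ 0)]
        have := abs_pos.2 (hxs j)
        intro hlt
        nlinarith
      rw [sv, if_neg hneg, h]
  have hset : affZerosStar n p = X '' T := by
    ext x
    constructor
    · rintro ⟨hx, h0⟩
      have hxf : ∀ i, eval x (f i) = 0 := (hpz x).1 h0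
      have i0 : Fin k := ⟨0, hk⟩
      have habs : ∀ j, |x j| = |xs j| :=
        abs_eq_abs_of_zeros (hf i0) (hproper i0) (hnd i0) (hnn i0) hx hxs (hxf i0) (hxz i0)
      refine ⟨sv x, ?_, ?_⟩
      · intro i
        have hsp := sp_eq_sp (hf i) (hproper i) hx hxs (hxf i) (hxz i)
        rw [sp_eq_nu, sp_eq_nu] at hsp
        exact nu_inj hsp
      · funext j
        show nu (sv x j) * |xs j| = x j
        rw [nu_sv, ← habs j, sg_mul_abs (hx j)]
    · rintro ⟨s, hs, rfl⟩
      refine ⟨fun j => hXne s j, ?_⟩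
      rw [hpz]
      intro i
      have habs : ∀ j, |X s j| = |xs j| := by
        intro j
        show abs (nu (s j) * abs (xs j)) = abs (xs j)
        rw [abs_mul, abs_nu, one_mul, abs_abs]
      have hsp : sp (X s) (β i) = sp xs (β i) := by
        rw [sp_eq_nu, sp_eq_nu, hsvX s, hs i]
      rw [eval_congr_aux (hf i) (fun j => hXne s j) hxs habs hsp]
      exact hxz i
  have hTfin : T.Finite := Set.toFinite T
  have hfin : (affZerosStar n p).Finite := by
    rw [hset]; exact hTfin.image X
  have hncard : (affZerosStar n p).ncard = T.ncard := by
    rw [hset, Set.ncard_image_of_injective _ hXinj]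
  set K : Set (Fin n → ZMod 2) :=
    {s | ∀ i, (∑ j, ((β i) j : ZMod 2) * s j) = 0} with hK
  have hdist : ∀ (i : Fin k) (s s' : Fin n → ZMod 2),
      (∑ j, ((β i) j : ZMod 2) * (s j + s' j))
        = (∑ j, ((β i) j : ZMod 2) * s j) + ∑ j, ((β i) j : ZMod 2) * s' j := by
    intro i s s'
    rw [← Finset.sum_add_distrib]
    exact Finset.sum_congr rfl fun j _ => by rw [mul_add]
  have hTK : T = (fun s => s + sv xs) '' K := by
    ext t
    constructor
    · intro ht
      refine ⟨t + sv xs, ?_, ?_⟩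
      · intro i
        show (∑ j, ((β i) j : ZMod 2) * ((t + sv xs) j)) = 0
        have : (∑ j, ((β i) j : ZMod 2) * (t j + sv xs j)) = 0 := by
          rw [hdist i t (sv xs), ht i, ← hdist i (sv xs) (sv xs)]
          rw [Finset.sum_eq_zero fun j _ => by rw [hself, mul_zero]]
        exact this
      · funext j
        show (t j + sv xs j) + sv xs j = t j
        rw [add_assoc, hself, add_zero]
    · rintro ⟨s, hs, rfl⟩
      intro i
      show (∑ j, ((β i) j : ZMod 2) * (s j + sv xs j)) = _
      rw [hdist i s (sv xs), hs i, zero_add]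
  have hcardTK : T.ncard = K.ncard := by
    rw [hTK]
    exact Set.ncard_image_of_injective _ (add_left_injective _)
  refine ⟨?_, ?_, ?_⟩
  · -- (a) all inner exponents even
    intro hall
    refine ⟨hfin, ?_⟩
    have hKuniv : K = Set.univ := by
      ext s
      simp only [hK, Set.mem_setOf_eq, Set.mem_univ, iff_true]
      intro i
      exact Finset.sum_eq_zero fun j _ => by
        rw [cast_eq_zero_of_even (hall i j), zero_mul]
    rw [hncard, hcardTK, hKuniv, Set.ncard_univ, card_pi_zmod]
  · -- (b) some inner exponent odd
    intro hnotall
    push_neg at hnotall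
    obtain ⟨i0, j0, hodd⟩ := hnotall
    set L : (Fin n → ZMod 2) →+ (Fin k → ZMod 2) :=
      AddMonoidHom.mk' (fun s i => ∑ j, ((β i) j : ZMod 2) * s j) (fun s s' => by
        funext i
        exact hdist i s s') with hL
    have hKL : K = (AddMonoidHom.ker L : Set (Fin n → ZMod 2)) := by
      ext s
      simp only [hK, Set.mem_setOf_eq, SetLike.mem_coe, AddMonoidHom.mem_ker]
      constructor
      · intro h
        funext i
        exact h i
      · intro h i
        exact congrFun h i
    set c : Fin n → ZMod 2 := fun j => ((β i0) j : ZMod 2) with hcdef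
    have hle : AddMonoidHom.ker L ≤ AddMonoidHom.ker (lin c) := by
      intro s hs
      rw [AddMonoidHom.mem_ker] at hs ⊢
      exact congrFun hs i0
    have hdvd : Nat.card (AddMonoidHom.ker L) ∣ 2 ^ (n - 1) := by
      rw [← card_ker_lin c j0 (cast_eq_one_of_odd hodd)]
      exact AddSubgroup.card_dvd_of_le hle
    have hKcard : K.ncard = Nat.card (AddMonoidHom.ker L) := by
      rw [hKL, ← Nat.card_coe_set_eq]
      rfl
    have h0K : (0 : Fin n → ZMod 2) ∈ K := by
      intro i
      exact Finset.sum_eq_zero fun j _ => by rw [Pi.zero_apply, mul_zero]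
    have hpos : 0 < (affZerosStar n p).ncard := by
      rw [hncard, hcardTK]
      exact (Set.ncard_pos (Set.toFinite K)).2 ⟨0, h0K⟩
    have hdvd' : (affZerosStar n p).ncard ∣ 2 ^ (n - 1) := by
      rw [hncard, hcardTK, hKcard]
      exact hdvd
    exact ⟨hfin, hpos, Nat.le_of_dvd (by positivity) hdvd', hdvd'⟩
  · -- (c) equal parities, some odd
    intro hpar hnotall
    push_neg at hnotall
    obtain ⟨i0, j0, hodd⟩ := hnotall
    set c : Fin n → ZMod 2 := fun j => ((β i0) j : ZMod 2) with hcdef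
    have hrows : ∀ (i : Fin k) (j : Fin n), ((β i) j : ZMod 2) = c j := by
      intro i j
      show ((β i) j : ZMod 2) = ((β i0) j : ZMod 2)
      rcases Nat.even_or_odd ((β i) j) with h | h
      · rw [cast_eq_zero_of_even h, cast_eq_zero_of_even ((hpar j i i0).1 h)]
      · have h2 : ¬ Even ((β i) j) := Nat.not_even_iff_odd.2 h
        rw [cast_eq_one_of_odd h2,
          cast_eq_one_of_odd (fun he => h2 ((hpar j i i0).2 he))]
    have hK0 : K = (AddMonoidHom.ker (lin c) : Set (Fin n → ZMod 2)) := by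
      ext s
      simp only [hK, Set.mem_setOf_eq, SetLike.mem_coe, AddMonoidHom.mem_ker, lin_apply]
      constructor
      · intro h
        have := h i0
        rw [Finset.sum_congr rfl fun j _ => by rw [hrows i0 j]] at this
        exact this
      · intro h i
        rw [Finset.sum_congr rfl fun j _ => by rw [hrows i j]]
        exact h
    have hKcard : K.ncard = Nat.card (AddMonoidHom.ker (lin c)) := by
      rw [hK0, ← Nat.card_coe_set_eq]
      rfl
    rw [hncard, hcardTK, hKcard, card_ker_lin c j0 (cast_eq_one_of_odd hodd)]
end

section
/- Let Γ = {−1, 1}^n (a set of 2^n points in (ℝ∖{0})^n). Then the exposed face C_{n,2d}(Γ) = {p ∈ C_{n,2d} : p(s) = 0 for all s ∈ Γ} of the SONC cone satisfies dim C_{n,2d}(Γ) ≤ binom(n+d, d), i.e., the dimension of the linear span of C_{n,2d}(Γ) in the space of n-variate polynomials of degree at most 2d is at most the number of monomials of degree at most 2d with all exponents even. -/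
open MvPolynomial Finset

theorem circuit_odd_coeff_zero_aux {n : ℕ} {g : MvPolynomial (Fin n) ℝ}
    {r : ℕ} {α : Fin (r + 1) → (Fin n →₀ ℕ)} {β : Fin n →₀ ℕ}
    (hα : ∀ j i, Even (α j i))
    (hsupp : (g.support : Set (Fin n →₀ ℕ)) ⊆ Set.range α ∪ {β})
    (hz : ∀ s : Fin n → ℝ, (∀ i, s i = 1 ∨ s i = -1) → eval s g = 0)
    {m : Fin n →₀ ℕ} {j : Fin n} (hodd : ¬ Even (m j)) :
    g.coeff m = 0 := by
  by_contra hc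
  have hm : m ∈ g.support := by simpa [MvPolynomial.mem_support_iff] using hc
  have hmβ : m = β := by
    rcases hsupp hm with ⟨j', hj'⟩ | h
    · exact absurd (hj' ▸ hα j' j) hodd
    · exact h
  have h0 : ∑ m' ∈ g.support, g.coeff m' = 0 := by
    have := hz (fun _ => 1) (fun i => Or.inl rfl)
    rw [eval_eq'] at this
    simpa using this
  set s : Fin n → ℝ := fun i => if i = j then -1 else 1 with hs
  have h1 : ∑ m' ∈ g.support, g.coeff m' * (-1 : ℝ) ^ (m' j) = 0 := by
    have := hz s (fun i => by by_cases h : i = j <;> simp [hs, h])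
    rw [eval_eq'] at this
    rw [← this]
    refine Finset.sum_congr rfl fun m' _ => ?_
    congr 1
    rw [Finset.prod_eq_single j (fun i _ hij => by simp [hs, hij])
      (fun h => absurd (Finset.mem_univ j) h)]
    simp [hs]
  have h2 : ∑ m' ∈ g.support, (g.coeff m' - g.coeff m' * (-1 : ℝ) ^ (m' j)) = 0 := by
    rw [Finset.sum_sub_distrib, h0, h1, sub_zero]
  have h3 : ∑ m' ∈ g.support, (g.coeff m' - g.coeff m' * (-1 : ℝ) ^ (m' j)) =
      g.coeff m - g.coeff m * (-1 : ℝ) ^ (m j) := by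
    refine Finset.sum_eq_single_of_mem m hm fun m' hm' hne => ?_
    have : ∀ i, Even (m' i) := by
      rcases hsupp hm' with ⟨j', hj'⟩ | h
      · exact hj' ▸ hα j'
      · exact absurd (h.trans hmβ.symm) hne
    rw [(this j).neg_one_pow]
    ring
  rw [h2] at h3
  rw [(Nat.not_even_iff_odd.1 hodd).neg_one_pow] at h3
  apply hc
  linarith [h3]

theorem card_even_le_aux (n d : ℕ) :
    Cardinal.mk {m : Fin n →₀ ℕ | (∀ i, Even (m i)) ∧ (m.sum fun _ e => e) ≤ 2 * d} ≤
      ((n + d).choose d : Cardinal) := by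
  classical
  have key : ∀ m : Fin n →₀ ℕ, (∀ i, Even (m i)) → (m.sum fun _ e => e) ≤ 2 * d →
      ∑ i, m i / 2 ≤ d := by
    intro m hme hms
    have hsum : (m.sum fun _ e => e) = ∑ i, m i :=
      Finsupp.sum_fintype _ _ (fun _ => rfl)
    have h2 : 2 * ∑ i, m i / 2 = ∑ i, m i := by
      rw [Finset.mul_sum]
      exact Finset.sum_congr rfl fun i _ => Nat.mul_div_cancel' (hme i).two_dvd
    omega
  set half : (Fin n →₀ ℕ) → (Fin n →₀ ℕ) :=
    fun m => m.mapRange (· / 2) (Nat.zero_div 2) with hhalf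
  set Φ : {m : Fin n →₀ ℕ | (∀ i, Even (m i)) ∧ (m.sum fun _ e => e) ≤ 2 * d} →
      Sym (Fin (n + 1)) d :=
    fun m => ⟨Finsupp.toMultiset
        (Finsupp.cons (d - ∑ i, (m : Fin n →₀ ℕ) i / 2) (half (m : Fin n →₀ ℕ))), by
      rw [Finsupp.card_toMultiset, Finsupp.sum_fintype _ _ (fun _ => rfl),
        Fin.sum_univ_succ, Finsupp.cons_zero]
      simp only [id_eq, Finsupp.cons_succ, hhalf, Finsupp.mapRange_apply]
      have := key m.1 m.2.1 m.2.2
      omega⟩ with hΦ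
  have hinj : Function.Injective Φ := by
    rintro ⟨m1, hm1⟩ ⟨m2, hm2⟩ h
    have h' := congrArg Subtype.val h
    simp only [hΦ] at h'
    refine Subtype.ext (Finsupp.ext fun i => ?_)
    show m1 i = m2 i
    have := congrArg (Multiset.count i.succ) h'
    simp only [Finsupp.count_toMultiset, Finsupp.cons_succ, hhalf,
      Finsupp.mapRange_apply] at this
    obtain ⟨c1, hc1⟩ := hm1.1 i
    obtain ⟨c2, hc2⟩ := hm2.1 i
    omega
  calc Cardinal.mk {m : Fin n →₀ ℕ | (∀ i, Even (m i)) ∧ (m.sum fun _ e => e) ≤ 2 * d}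
      ≤ Cardinal.mk (Sym (Fin (n + 1)) d) := Cardinal.mk_le_of_injective hinj
    _ = ((n + d).choose d : Cardinal) := by
        rw [Cardinal.mk_fintype, Sym.card_sym_eq_choose, Fintype.card_fin]
        norm_num

/-- Let `Γ = {−1,1}^n`. Then the exposed face
`C_{n,2d}(Γ) = {p ∈ C_{n,2d} : p(s) = 0 for all s ∈ Γ}` of the SONC cone satisfies
`dim C_{n,2d}(Γ) ≤ binom(n+d, d)` (the dimension of its linear span in the space of
polynomials). -/
theorem stmt18 (n d : ℕ) :
    Module.rank ℝ (Submodule.span ℝ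
        {p ∈ soncCone n (2 * d) |
          ∀ s : Fin n → ℝ, (∀ i, s i = 1 ∨ s i = -1) → eval s p = 0}) ≤
      ((n + d).choose d : Cardinal) := by

  classical
  set E : Set (Fin n →₀ ℕ) :=
    {m | (∀ i, Even (m i)) ∧ (m.sum fun _ e => e) ≤ 2 * d} with hE
  set G : Set (MvPolynomial (Fin n) ℝ) := (fun m => (monomial m (1 : ℝ))) '' E with hG
  have hsub : {p ∈ soncCone n (2 * d) |
      ∀ s : Fin n → ℝ, (∀ i, s i = 1 ∨ s i = -1) → eval s p = 0} ⊆
      ↑(Submodule.span ℝ G) := by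
    rintro p ⟨⟨⟨k, μ, g, hμ, hcirc, hnn, hp⟩, hdeg⟩, hvan⟩
    -- each circuit with positive weight vanishes on all sign vectors
    have hgz : ∀ i, μ i ≠ 0 → ∀ s : Fin n → ℝ,
        (∀ j, s j = 1 ∨ s j = -1) → eval s (g i) = 0 := by
      intro i hi s hs
      have h0 : ∑ i, μ i * eval s (g i) = 0 := by
        have h := hvan s hs
        rw [hp, map_sum] at h
        simpa [smul_eq_C_mul] using h
      have hterm : ∀ i ∈ Finset.univ, (0 : ℝ) ≤ μ i * eval s (g i) :=
        fun i _ => mul_nonneg (hμ i) (hnn i s)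
      have := (Finset.sum_eq_zero_iff_of_nonneg hterm).1 h0 i (Finset.mem_univ i)
      exact (mul_eq_zero.1 this).resolve_left hi
    -- coefficients at exponents with an odd entry vanish
    have hcoeff : ∀ m : Fin n →₀ ℕ, (¬ ∀ j, Even (m j)) → p.coeff m = 0 := by
      intro m hm
      push_neg at hm
      obtain ⟨j, hj⟩ := hm
      rw [hp]
      rw [MvPolynomial.coeff_sum]
      refine Finset.sum_eq_zero fun i _ => ?_
      rw [MvPolynomial.coeff_smul]
      by_cases hi : μ i = 0
      · rw [hi, zero_smul]
      · obtain ⟨r, α, β, lam, hcw⟩ := hcirc i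
        rw [circuit_odd_coeff_zero_aux hcw.2.1 hcw.2.2.2.2.2.2.2 (hgz i hi) hj, smul_zero]
    -- hence p is in the span of the admissible monomials
    nth_rewrite 1 [p.as_sum]
    refine Submodule.sum_mem _ fun v hv => ?_
    have hvE : v ∈ E := by
      constructor
      · by_contra hodd
        exact (MvPolynomial.mem_support_iff.1 hv) (hcoeff v hodd)
      · exact le_trans (MvPolynomial.le_totalDegree hv) hdeg
    have : (monomial v) (p.coeff v) = (p.coeff v) • (monomial v (1 : ℝ)) := by
      rw [MvPolynomial.smul_monomial, smul_eq_mul, mul_one]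
    rw [this]
    exact Submodule.smul_mem _ _ (Submodule.subset_span ⟨v, hvE, rfl⟩)
  refine le_trans (Submodule.rank_mono (Submodule.span_le.2 hsub)) ?_
  refine le_trans (rank_span_le G) ?_
  refine le_trans (Cardinal.mk_image_le) ?_
  exact card_even_le_aux n d
end

section
/- For the univariate SONC cone C_{1,2d}: (1) for Γ = {1, −1} and d ≥ 2, the exposed face C_{1,2d}(Γ) = {p ∈ C_{1,2d} : p(1) = p(−1) = 0} has dimension exactly d − 1; (2) for Γ = {1}, the exposed face C_{1,2d}(Γ) = {p ∈ C_{1,2d} : p(1) = 0} has dimension exactly 2d − 1. Here dimension means the dimension of the linear span of the face in the space of univariate polynomials of degree at most 2d. -/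
open Polynomial

noncomputable section

/-- A univariate circuit polynomial: `f = a x^m + b x^r + c x^k` with `a, c > 0`,
`k < r < m`, and `k`, `m` even. -/
def IsCircuit1 (f : Polynomial ℝ) : Prop :=
  ∃ (a b c : ℝ) (k r m : ℕ), 0 < a ∧ 0 < c ∧ k < r ∧ r < m ∧ Even k ∧ Even m ∧
    f = C a * X ^ m + C b * X ^ r + C c * X ^ k

/-- The univariate SONC cone `C_{1,D}`: finite nonnegative combinations of nonnegative
circuit polynomials of degree at most `D`. -/
def soncCone1 (D : ℕ) : Set (Polynomial ℝ) :=
  {p | ∃ (k : ℕ) (μ : Fin k → ℝ) (g : Fin k → Polynomial ℝ),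
    (∀ i, 0 ≤ μ i) ∧ (∀ i, IsCircuit1 (g i)) ∧ (∀ i, ∀ x : ℝ, 0 ≤ (g i).eval x) ∧
    (∀ i, (g i).natDegree ≤ D) ∧ p = ∑ i, μ i • g i}

end

noncomputable section Stmt19Aux

namespace Stmt19Aux

open Polynomial Submodule LinearMap Module

/-- AM–GM key inequality: for `0 < r < n` and `t ≥ 0`, `n t^r ≤ r t^n + (n-r)`. -/
lemma key {n r : ℕ} (hr : 0 < r) (hrn : r < n) {t : ℝ} (ht : 0 ≤ t) :
    (n : ℝ) * t ^ r ≤ r * t ^ n + ((n : ℝ) - r) := by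
  have hn0 : (0:ℝ) < n := by
    have : 0 < n := lt_trans hr hrn
    exact_mod_cast this
  have hrn' : (r:ℝ) ≤ n := by exact_mod_cast hrn.le
  have hw1 : (0:ℝ) ≤ (r:ℝ)/n := by positivity
  have hw2 : (0:ℝ) ≤ ((n:ℝ)-r)/n := div_nonneg (by linarith) hn0.le
  have hsum : (r:ℝ)/n + ((n:ℝ)-r)/n = 1 := by field_simp; ring
  have hp1 : (0:ℝ) ≤ t ^ n := pow_nonneg ht n
  have H := Real.geom_mean_le_arith_mean2_weighted hw1 hw2 hp1 zero_le_one hsum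
  have hrw : (t ^ n : ℝ) ^ ((r:ℝ)/n) = t ^ r := by
    rw [← Real.rpow_natCast t n, ← Real.rpow_mul ht,
      show (n:ℝ) * ((r:ℝ)/n) = (r:ℕ) by field_simp, Real.rpow_natCast]
  rw [hrw, Real.one_rpow, mul_one, mul_one] at H
  have H2 := mul_le_mul_of_nonneg_left H hn0.le
  calc (n:ℝ) * t ^ r ≤ n * ((r:ℝ)/n * t^n + ((n:ℝ)-r)/n) := H2
    _ = r * t^n + ((n:ℝ) - r) := by field_simp

/-- The basic extremal circuit polynomial `r x^D - D x^r + (D - r)`. -/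
def Fp (D r : ℕ) : ℝ[X] :=
  C (r : ℝ) * X ^ D + C (-(D : ℝ)) * X ^ r + C ((D : ℝ) - r) * X ^ 0

lemma Fp_eval (D r : ℕ) (x : ℝ) :
    (Fp D r).eval x = r * x ^ D + (-(D:ℝ)) * x ^ r + ((D:ℝ) - r) := by
  simp [Fp]

lemma Fp_eval_one (D r : ℕ) : (Fp D r).eval 1 = 0 := by
  rw [Fp_eval]; ring

lemma Fp_eval_nonneg_of_nonneg {D r : ℕ} (hr : 0 < r) (hrD : r < D) {t : ℝ} (ht : 0 ≤ t) :
    0 ≤ (Fp D r).eval t := by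
  have := key hr hrD ht
  rw [Fp_eval]; linarith

lemma Fp_nonneg {D r : ℕ} (hr : 0 < r) (hrD : r < D) (hD : Even D) (x : ℝ) :
    0 ≤ (Fp D r).eval x := by
  have h1 : x ^ D = |x| ^ D := (hD.pow_abs x).symm
  have h2 : x ^ r ≤ |x| ^ r := by
    calc x ^ r ≤ |x ^ r| := le_abs_self _
      _ = |x| ^ r := abs_pow x r
  have h3 := key hr hrD (abs_nonneg x)
  have h4 : (D:ℝ) * x ^ r ≤ D * |x| ^ r :=
    mul_le_mul_of_nonneg_left h2 (by positivity)
  rw [Fp_eval, h1]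
  nlinarith [h3, h4]

lemma Fp_isCircuit {D r : ℕ} (hr : 0 < r) (hrD : r < D) (hD : Even D) :
    IsCircuit1 (Fp D r) := by
  refine ⟨(r:ℝ), -(D:ℝ), (D:ℝ) - r, 0, r, D, by exact_mod_cast hr, ?_, hr, hrD,
    Even.zero, hD, rfl⟩
  have : (r:ℝ) < D := by exact_mod_cast hrD
  linarith

lemma tri_natDegree_le (a b c : ℝ) {k r m : ℕ} (hk : k ≤ m) (hr : r ≤ m) :
    (C a * X ^ m + C b * X ^ r + C c * X ^ k).natDegree ≤ m := by
  refine (natDegree_add_le _ _).trans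
    (max_le ((natDegree_add_le _ _).trans (max_le ?_ ?_)) ?_) <;>
    refine (natDegree_C_mul_le _ _).trans ?_ <;> simp [hk, hr]

lemma Fp_natDegree_le {D r : ℕ} (hrD : r ≤ D) : (Fp D r).natDegree ≤ D :=
  tri_natDegree_le _ _ _ (Nat.zero_le D) hrD

lemma Fp_comp (D r : ℕ) :
    (Fp D r).comp (X ^ 2) =
      C (r:ℝ) * X ^ (2*D) + C (-(D:ℝ)) * X ^ (2*r) + C ((D:ℝ) - r) * X ^ 0 := by
  simp [Fp, Polynomial.add_comp, Polynomial.mul_comp, Polynomial.C_comp, Polynomial.X_pow_comp, pow_mul]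

lemma Fp_coeff_of {D r t : ℕ} (ht0 : t ≠ 0) (htD : t ≠ D) :
    (Fp D r).coeff t = if t = r then -(D:ℝ) else 0 := by
  rcases eq_or_ne t r with h | h
  · subst h; simp [Fp, coeff_X_pow, ht0, htD]
  · simp [Fp, coeff_X_pow, ht0, htD, h]

lemma Fpc_coeff_of {D r t : ℕ} (ht0 : t ≠ 0) (htD : t ≠ 2*D) :
    ((Fp D r).comp (X ^ 2)).coeff t = if t = 2*r then -(D:ℝ) else 0 := by
  rw [Fp_comp]
  rcases eq_or_ne t (2*r) with h | h
  · subst h; simp [coeff_X_pow, ht0, htD]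
  · simp [coeff_X_pow, ht0, htD, h]

lemma cone_nonneg {D : ℕ} {p : ℝ[X]} (hp : p ∈ soncCone1 D) (x : ℝ) : 0 ≤ p.eval x := by
  obtain ⟨k, μ, g, hμ, -, hg, -, rfl⟩ := hp
  rw [eval_finset_sum]
  refine Finset.sum_nonneg fun i _ => ?_
  rw [eval_smul, smul_eq_mul]
  exact mul_nonneg (hμ i) (hg i x)

lemma cone_mem_degreeLE {D : ℕ} {p : ℝ[X]} (hp : p ∈ soncCone1 D) :
    p ∈ degreeLE ℝ (D : WithBot ℕ) := by
  obtain ⟨k, μ, g, -, -, -, hdeg, rfl⟩ := hp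
  exact Submodule.sum_mem _ fun i _ => Submodule.smul_mem _ _
    (mem_degreeLE.mpr (natDegree_le_iff_degree_le.mp (hdeg i)))

lemma deriv_eval_eq_zero {p : ℝ[X]} (h : ∀ x : ℝ, 0 ≤ p.eval x) {x0 : ℝ}
    (h0 : p.eval x0 = 0) : p.derivative.eval x0 = 0 := by
  have hmin : IsLocalMin (fun x : ℝ => p.eval x) x0 :=
    Filter.Eventually.of_forall fun x =>
      show p.eval x0 ≤ p.eval x by rw [h0]; exact h x
  have := hmin.deriv_eq_zero
  rwa [Polynomial.deriv] at this

/-- Evaluation at 1 together with derivative evaluation at 1, as a linear map. -/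
def Phi : ℝ[X] →ₗ[ℝ] ℝ × ℝ :=
  (leval 1).prod ((leval 1).comp (derivative : ℝ[X] →ₗ[ℝ] ℝ[X]))

lemma Phi_apply (p : ℝ[X]) : Phi p = (p.eval 1, p.derivative.eval 1) := rfl

lemma face_mem_ker {D : ℕ} {p : ℝ[X]} (hp : p ∈ soncCone1 D) (h1 : p.eval 1 = 0) :
    p ∈ LinearMap.ker Phi := by
  have h2 := deriv_eval_eq_zero (cone_nonneg hp) h1
  rw [LinearMap.mem_ker, Phi_apply, h1, h2]
  rfl

lemma degreeLE_fd (n : ℕ) : FiniteDimensional ℝ (degreeLE ℝ (n : WithBot ℕ)) := by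
  rw [← degreeLT_succ_eq_degreeLE]
  exact Module.Finite.equiv (degreeLTEquiv ℝ (n+1)).symm

lemma degreeLE_finrank (n : ℕ) : finrank ℝ (degreeLE ℝ (n : WithBot ℕ)) = n + 1 := by
  rw [← degreeLT_succ_eq_degreeLE, (degreeLTEquiv ℝ (n+1)).finrank_eq]
  simp

lemma finrank_inf_ker (W : Submodule ℝ ℝ[X]) [FiniteDimensional ℝ W]
    (hsurj : ∀ y : ℝ × ℝ, ∃ p ∈ W, Phi p = y) :
    finrank ℝ ↥(W ⊓ LinearMap.ker Phi) + 2 = finrank ℝ W := by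
  have h1 : W ⊓ LinearMap.ker Phi = (LinearMap.ker (Phi.comp W.subtype)).map W.subtype := by
    rw [LinearMap.ker_comp, Submodule.map_comap_subtype]
  rw [h1, Submodule.finrank_map_subtype_eq]
  have h2 := LinearMap.finrank_range_add_finrank_ker (Phi.comp W.subtype)
  have hr : LinearMap.range (Phi.comp W.subtype) = ⊤ := by
    rw [LinearMap.range_eq_top]
    intro y
    obtain ⟨p, hpW, hy⟩ := hsurj y
    exact ⟨⟨p, hpW⟩, hy⟩
  rw [hr] at h2
  have h3 : finrank ℝ (⊤ : Submodule ℝ (ℝ × ℝ)) = 2 := by simp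
  omega

/-- Substitution `x ↦ x²` as a linear map. -/
def T : ℝ[X] →ₗ[ℝ] ℝ[X] := (aeval (X ^ 2 : ℝ[X])).toLinearMap

lemma T_apply (p : ℝ[X]) : T p = p.comp (X ^ 2) := by
  simp [T, aeval_def, Polynomial.comp, Polynomial.algebraMap_eq]

lemma T_injective : Function.Injective T := by
  intro p q hpq
  have h0 : T (p - q) = 0 := by rw [map_sub, hpq, sub_self]
  rw [T_apply, comp_eq_zero_iff] at h0
  rcases h0 with h | ⟨-, h⟩
  · exact sub_eq_zero.mp h
  · exfalso
    have : (X ^ 2 : ℝ[X]).coeff 0 = 0 := by simp [coeff_X_pow]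
    rw [this, map_zero] at h
    exact pow_ne_zero 2 X_ne_zero h

lemma main_aux {S : Set ℝ[X]} {V : Submodule ℝ ℝ[X]} [FiniteDimensional ℝ V]
    {N : ℕ} (v : Fin N → ℝ[X]) (hv : LinearIndependent ℝ v) (hvS : ∀ i, v i ∈ S)
    (hSV : S ⊆ ↑V) (hVrank : finrank ℝ V = N) : finrank ℝ (span ℝ S) = N := by
  have h1 : span ℝ S ≤ V := span_le.mpr hSV
  haveI : FiniteDimensional ℝ (span ℝ S) := Submodule.finiteDimensional_of_le h1
  have h2 : span ℝ (Set.range v) ≤ span ℝ S := span_mono (Set.range_subset_iff.mpr hvS)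
  have h3 : finrank ℝ (span ℝ (Set.range v)) = N := by
    rw [finrank_span_eq_card hv, Fintype.card_fin]
  exact le_antisymm ((Submodule.finrank_mono h1).trans hVrank.le)
    (h3 ▸ Submodule.finrank_mono h2)

lemma circuit_mem_cone {D : ℕ} {g : ℝ[X]} (h1 : IsCircuit1 g) (h2 : ∀ x, 0 ≤ g.eval x)
    (h3 : g.natDegree ≤ D) : g ∈ soncCone1 D :=
  ⟨1, fun _ => 1, fun _ => g, fun _ => zero_le_one, fun _ => h1, fun _ => h2,
    fun _ => h3, by simp⟩


lemma indep2 {d : ℕ} :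
    LinearIndependent ℝ (fun i : Fin (2*d-1) => Fp (2*d) ((i:ℕ)+1)) := by
  rw [Fintype.linearIndependent_iff]
  intro c hc i
  have h := congrArg (fun q : ℝ[X] => q.coeff ((i:ℕ)+1)) hc
  simp only [finset_sum_coeff, coeff_smul, smul_eq_mul, coeff_zero] at h
  rw [Finset.sum_eq_single i] at h
  · rw [Fp_coeff_of (by omega) (by have := i.isLt; omega), if_pos rfl] at h
    have hD : ((2*d:ℕ):ℝ) ≠ 0 := Nat.cast_ne_zero.mpr (by have := i.isLt; omega)
    rcases mul_eq_zero.mp h with h' | h'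
    · exact h'
    · exact absurd h' (by simpa using hD)
  · intro j _ hj
    rw [Fp_coeff_of (by omega) (by have := j.isLt; omega), if_neg, mul_zero]
    exact fun H => hj (Fin.ext (by omega))
  · exact fun hi => absurd (Finset.mem_univ i) hi

lemma indep1 {d : ℕ} :
    LinearIndependent ℝ (fun i : Fin (d-1) => (Fp d ((i:ℕ)+1)).comp (X^2)) := by
  rw [Fintype.linearIndependent_iff]
  intro c hc i
  have h := congrArg (fun q : ℝ[X] => q.coeff (2*((i:ℕ)+1))) hc
  simp only [finset_sum_coeff, coeff_smul, smul_eq_mul, coeff_zero] at h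
  rw [Finset.sum_eq_single i] at h
  · rw [Fpc_coeff_of (by omega) (by have := i.isLt; omega), if_pos rfl] at h
    have hD : ((d:ℕ):ℝ) ≠ 0 := Nat.cast_ne_zero.mpr (by have := i.isLt; omega)
    rcases mul_eq_zero.mp h with h' | h'
    · exact h'
    · exact absurd h' (by simpa using hD)
  · intro j _ hj
    rw [Fpc_coeff_of (by omega) (by have := j.isLt; omega), if_neg, mul_zero]
    exact fun H => hj (Fin.ext (by omega))
  · exact fun hi => absurd (Finset.mem_univ i) hi

lemma lin_mem_degreeLE {n : ℕ} (hn : 1 ≤ n) (u v : ℝ) :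
    C u + C v * X ∈ degreeLE ℝ ((n : ℕ) : WithBot ℕ) := by
  apply mem_degreeLE.mpr
  apply natDegree_le_iff_degree_le.mp
  refine (natDegree_add_le _ _).trans ?_
  have h1 : (C v * X).natDegree ≤ 1 := (natDegree_C_mul_le _ _).trans natDegree_X.le
  have h2 : (C u : ℝ[X]).natDegree = 0 := natDegree_C _
  omega

lemma surj2 {d : ℕ} (hd : 1 ≤ d) (y : ℝ × ℝ) :
    ∃ p ∈ degreeLE ℝ ((2*d : ℕ) : WithBot ℕ), Phi p = y := by
  obtain ⟨u, v⟩ := y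
  refine ⟨C (u - v) + C v * X, lin_mem_degreeLE (by omega) _ _, ?_⟩
  rw [Phi_apply]
  have hder : derivative (C (u - v) + C v * X) = C v := by
    simp [derivative_C_mul_X]
  rw [hder]
  simp [Prod.ext_iff]

lemma surj1 {d : ℕ} (hd : 1 ≤ d) (y : ℝ × ℝ) :
    ∃ p ∈ (degreeLE ℝ ((d : ℕ) : WithBot ℕ)).map T, Phi p = y := by
  obtain ⟨u, v⟩ := y
  refine ⟨T (C (u - v/2) + C (v/2) * X), Submodule.mem_map_of_mem
    (lin_mem_degreeLE hd _ _), ?_⟩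
  rw [T_apply, Phi_apply]
  have hc : (C (u - v/2) + C (v/2) * X).comp (X^2) = C (u - v/2) + C (v/2) * X^2 := by
    simp [Polynomial.add_comp, Polynomial.mul_comp, Polynomial.C_comp, Polynomial.X_comp]
  rw [hc]
  have hder : derivative (C (u - v/2) + C (v/2) * X^2) = C (v/2) * (C 2 * X) := by
    simp [derivative_X_pow]; left; rw [map_ofNat]; norm_num
  rw [hder]
  simp [Prod.ext_iff]

lemma circuit_even {d : ℕ} {g : ℝ[X]} (hc : IsCircuit1 g) (hdeg : g.natDegree ≤ 2*d)
    (h1 : g.eval 1 = 0) (h2 : g.eval (-1) = 0) :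
    g ∈ (degreeLE ℝ ((d : ℕ) : WithBot ℕ)).map T := by
  obtain ⟨a, b, c, k, r, m, ha, hcpos, hkr, hrm, hek, hem, rfl⟩ := hc
  have e1 : a + b + c = 0 := by simpa using h1
  have e2 : a + b * (-1:ℝ)^r + c = 0 := by
    simpa [hem.neg_one_pow, hek.neg_one_pow] using h2
  have her : Even r := by
    by_contra hodd
    have hro : Odd r := Nat.not_even_iff_odd.mp hodd
    rw [hro.neg_one_pow] at e2
    have hb : b = 0 := by linarith
    rw [hb] at e1
    linarith
  have hm : m ≤ 2*d := by
    have hcoeff : (C a * X^m + C b * X^r + C c * X^k).coeff m = a := by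
      simp [coeff_X_pow, hrm.ne', (hkr.trans hrm).ne']
    have := le_natDegree_of_ne_zero (p := C a * X^m + C b * X^r + C c * X^k)
      (n := m) (by rw [hcoeff]; exact ha.ne')
    omega
  have hm2 : 2*(m/2) = m := by have := Nat.even_iff.mp hem; omega
  have hr2 : 2*(r/2) = r := by have := Nat.even_iff.mp her; omega
  have hk2 : 2*(k/2) = k := by have := Nat.even_iff.mp hek; omega
  refine ⟨C a * X^(m/2) + C b * X^(r/2) + C c * X^(k/2), ?_, ?_⟩
  · apply mem_degreeLE.mpr
    apply natDegree_le_iff_degree_le.mp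
    refine (tri_natDegree_le a b c (Nat.div_le_div_right (hkr.trans hrm).le)
      (Nat.div_le_div_right hrm.le)).trans (by omega)
  · rw [T_apply]
    simp [Polynomial.add_comp, Polynomial.mul_comp, Polynomial.C_comp,
      Polynomial.X_pow_comp, ← pow_mul, hm2, hr2, hk2]

lemma face1_subset {d : ℕ} {p : ℝ[X]} (hp : p ∈ soncCone1 (2*d))
    (h1 : p.eval 1 = 0) (h2 : p.eval (-1) = 0) :
    p ∈ (degreeLE ℝ ((d : ℕ) : WithBot ℕ)).map T := by
  obtain ⟨k, μ, g, hμ, hcirc, hnn, hdeg, rfl⟩ := hp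
  rw [eval_finset_sum] at h1 h2
  simp only [eval_smul, smul_eq_mul] at h1 h2
  have hterm1 := (Finset.sum_eq_zero_iff_of_nonneg
    (fun i _ => mul_nonneg (hμ i) (hnn i 1))).mp h1
  have hterm2 := (Finset.sum_eq_zero_iff_of_nonneg
    (fun i _ => mul_nonneg (hμ i) (hnn i (-1)))).mp h2
  refine Submodule.sum_mem _ fun i _ => ?_
  rcases eq_or_ne (μ i) 0 with h | h
  · rw [h, zero_smul]; exact Submodule.zero_mem _
  · refine Submodule.smul_mem _ _ (circuit_even (hcirc i) (hdeg i) ?_ ?_)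
    · rcases mul_eq_zero.mp (hterm1 i (Finset.mem_univ i)) with h' | h'
      · exact absurd h' h
      · exact h'
    · rcases mul_eq_zero.mp (hterm2 i (Finset.mem_univ i)) with h' | h'
      · exact absurd h' h
      · exact h'

lemma Fpc_isCircuit {D r : ℕ} (hr : 0 < r) (hrD : r < D) :
    IsCircuit1 ((Fp D r).comp (X^2)) := by
  refine ⟨(r:ℝ), -(D:ℝ), (D:ℝ)-r, 0, 2*r, 2*D, by exact_mod_cast hr, ?_,
    by omega, by omega, Even.zero, even_two_mul D, by rw [Fp_comp]⟩
  have : (r:ℝ) < D := by exact_mod_cast hrD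
  linarith

lemma Fpc_eval (D r : ℕ) (x : ℝ) :
    ((Fp D r).comp (X^2)).eval x = (Fp D r).eval (x^2) := by
  rw [eval_comp]; simp

lemma Fpc_nonneg {D r : ℕ} (hr : 0 < r) (hrD : r < D) (x : ℝ) :
    0 ≤ ((Fp D r).comp (X^2)).eval x := by
  rw [Fpc_eval]
  exact Fp_eval_nonneg_of_nonneg hr hrD (sq_nonneg x)

lemma Fpc_natDegree_le {D r : ℕ} (hrD : r ≤ D) :
    ((Fp D r).comp (X^2)).natDegree ≤ 2*D := by
  rw [natDegree_comp, natDegree_X_pow]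
  have := Fp_natDegree_le hrD
  omega

end Stmt19Aux

end Stmt19Aux

/-- For the univariate SONC cone `C_{1,2d}`:
(1) for `Γ = {1, −1}` and `d ≥ 2` the exposed face
`C_{1,2d}(Γ) = {p ∈ C_{1,2d} : p(1) = p(−1) = 0}` has dimension exactly `d − 1`;
(2) for `Γ = {1}` the exposed face `{p ∈ C_{1,2d} : p(1) = 0}` has dimension exactly
`2d − 1`. Dimension means the dimension of the linear span of the face. -/
theorem stmt19 (d : ℕ) :
    (2 ≤ d → Module.finrank ℝ (Submodule.span ℝ
        {p ∈ soncCone1 (2 * d) | p.eval 1 = 0 ∧ p.eval (-1) = 0}) = d - 1) ∧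
    (1 ≤ d → Module.finrank ℝ (Submodule.span ℝ
        {p ∈ soncCone1 (2 * d) | p.eval 1 = 0}) = 2 * d - 1) := by
  open Stmt19Aux in
  constructor
  · -- part (1)
    intro hd2
    have hd1 : 1 ≤ d := by omega
    haveI : FiniteDimensional ℝ (degreeLE ℝ ((d : ℕ) : WithBot ℕ)) := degreeLE_fd d
    haveI hWfd : FiniteDimensional ℝ ((degreeLE ℝ ((d : ℕ) : WithBot ℕ)).map T) :=
      Module.Finite.equiv (Submodule.equivMapOfInjective T T_injective _)
    set V : Submodule ℝ (Polynomial ℝ) :=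
      (degreeLE ℝ ((d : ℕ) : WithBot ℕ)).map T ⊓ LinearMap.ker Phi with hV
    haveI : FiniteDimensional ℝ V :=
      Submodule.finiteDimensional_of_le (inf_le_left)
    have hWrank : Module.finrank ℝ ((degreeLE ℝ ((d : ℕ) : WithBot ℕ)).map T) = d + 1 :=
      ((Submodule.equivMapOfInjective T T_injective _).symm.finrank_eq).trans
        (degreeLE_finrank d)
    have hVrank : Module.finrank ℝ V = d - 1 := by
      have := finrank_inf_ker _ (surj1 hd1)
      rw [hWrank] at this
      rw [← hV] at this
      omega
    refine main_aux (V := V) (fun i : Fin (d-1) => (Fp d ((i:ℕ)+1)).comp (X^2))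
      indep1 ?_ ?_ hVrank
    · intro i
      have hr : 0 < (i:ℕ)+1 := Nat.succ_pos _
      have hrD : (i:ℕ)+1 < d := by have := i.isLt; omega
      refine ⟨circuit_mem_cone (Fpc_isCircuit hr hrD) (Fpc_nonneg hr hrD)
        (Fpc_natDegree_le hrD.le), ?_, ?_⟩
      · rw [Fpc_eval, one_pow, Fp_eval_one]
      · rw [Fpc_eval, neg_one_sq, Fp_eval_one]
    · rintro p ⟨hp, h1, h2⟩
      exact Submodule.mem_inf.mpr ⟨face1_subset hp h1 h2, face_mem_ker hp h1⟩
  · -- part (2)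
    intro hd1
    haveI : FiniteDimensional ℝ (degreeLE ℝ ((2*d : ℕ) : WithBot ℕ)) := degreeLE_fd (2*d)
    set V : Submodule ℝ (Polynomial ℝ) :=
      degreeLE ℝ ((2*d : ℕ) : WithBot ℕ) ⊓ LinearMap.ker Phi with hV
    haveI : FiniteDimensional ℝ V :=
      Submodule.finiteDimensional_of_le (inf_le_left)
    have hVrank : Module.finrank ℝ V = 2*d - 1 := by
      have := finrank_inf_ker _ (surj2 hd1)
      rw [degreeLE_finrank (2*d)] at this
      rw [← hV] at this
      omega
    refine main_aux (V := V) (fun i : Fin (2*d-1) => Fp (2*d) ((i:ℕ)+1))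
      indep2 ?_ ?_ hVrank
    · intro i
      have hr : 0 < (i:ℕ)+1 := Nat.succ_pos _
      have hrD : (i:ℕ)+1 < 2*d := by have := i.isLt; omega
      exact ⟨circuit_mem_cone (Fp_isCircuit hr hrD (even_two_mul d))
        (Fp_nonneg hr hrD (even_two_mul d)) (Fp_natDegree_le hrD.le), Fp_eval_one _ _⟩
    · rintro p ⟨hp, h1⟩
      exact Submodule.mem_inf.mpr ⟨cone_mem_degreeLE hp, face_mem_ker hp h1⟩
end
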